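/- arXiv:0706.3250 — 5 statements merged into one kernel-verified Lean document; each statement's English description precedes it below -/
import Mathlib

section
/- Let m ≥ 1 and let a_1 = 1 < a_2 < ... < a_m be integers with a_i ≤ 3·a_{i-1} for 2 ≤ i ≤ m. Set a_{m+i} = 2a_m − a_{m−i} for 1 ≤ i ≤ m−1 and a_{2m} = 2a_m, and let M = a_{2m} = 2a_m. Then for every 1 ≤ r ≤ m−1 and every nonnegative integer n with ⌊n/M⌋ ≤ r and n − ⌊n/M⌋·M < a_{r+1}, the integer n can be written as a sum of at most 2r elements of {a_1, ..., a_{2m}} with repetition allowed. -/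
/-! Induction on `r`, for all `n = q M + s` with `q ≤ r` and `s < a_{r+1}`. Passing from `r` to
`r + 1` (so `s < a_{r+2} ≤ 3 a_{r+1}`) must cost at most two new elements: copies of `a_{r+1}`
(at most two) and, when `q = r + 1`, one copy of `M`. This would cost three only when
`q = r + 1` and `s ≥ 2 a_{r+1}`; there `M + s = a_{r+2} + (M - a_{r+1}) + (s + a_{r+1} - a_{r+2})`,
where `M - a_{r+1} = a_{2m-r-1}` is a base element by symmetry and the last summand is
`< a_{r+1}`. -/

/-- `n` can be written as a sum of at most `t` elements of `A`, with repetition. -/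
def CanRep (A : Finset ℕ) (t n : ℕ) : Prop :=
  ∃ l : Multiset ℕ, (∀ x ∈ l, x ∈ A) ∧ Multiset.card l ≤ t ∧ l.sum = n

namespace CanRep

variable {A : Finset ℕ} {t t' n n' x : ℕ}

theorem zero (A : Finset ℕ) (t : ℕ) : CanRep A t 0 :=
  ⟨0, by simp, by simp, by simp⟩

theorem mono (h : CanRep A t n) (htt : t ≤ t') : CanRep A t' n := by
  obtain ⟨l, hlA, hcard, hsum⟩ := h
  exact ⟨l, hlA, hcard.trans htt, hsum⟩

theorem add (h : CanRep A t n) (h' : CanRep A t' n') : CanRep A (t + t') (n + n') := by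
  obtain ⟨l, hlA, hcard, hsum⟩ := h
  obtain ⟨l', hlA', hcard', hsum'⟩ := h'
  refine ⟨l + l', ?_, ?_, by simp [hsum, hsum']⟩
  · intro y hy
    rcases Multiset.mem_add.mp hy with hy | hy
    exacts [hlA y hy, hlA' y hy]
  · simpa using Nat.add_le_add hcard hcard'

theorem mul_of_mem (hx : x ∈ A) (d : ℕ) : CanRep A d (d * x) :=
  ⟨Multiset.replicate d x, fun _ hy => (Multiset.eq_of_mem_replicate hy) ▸ hx, by simp, by simp⟩

theorem of_mem (hx : x ∈ A) : CanRep A 1 x := by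
  simpa using mul_of_mem hx 1

theorem add_of_lt_mul {b d s : ℕ} (hb : b ∈ A) (h : ∀ s < b, CanRep A t (x + s))
    (hs : s < (d + 1) * b) : CanRep A (t + d) (x + s) := by
  have hbpos : 0 < b := Nat.pos_of_ne_zero (by rintro rfl; simp at hs)
  have hquot : s / b ≤ d := Nat.lt_succ_iff.mp (Nat.div_lt_of_lt_mul (by linarith))
  have hrep := (h (s % b) (Nat.mod_lt s hbpos)).add (mul_of_mem hb (s / b))
  rw [add_assoc, Nat.mod_add_div'] at hrep
  exact hrep.mono (by omega)

end CanRep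

open CanRep

theorem canRep_mul_add_succ {A : Finset ℕ} {M b c r : ℕ} (hM : M ∈ A) (hb : b ∈ A) (hc : c ∈ A)
    (hMb : M - b ∈ A) (hbM : b ≤ M) (hcb : c ≤ 3 * b)
    (ih : ∀ q ≤ r, ∀ s < b, CanRep A (2 * r) (M * q + s)) :
    ∀ q ≤ r + 1, ∀ s < c, CanRep A (2 * (r + 1)) (M * q + s) := by
  intro q hq s hs
  rcases hq.lt_or_eq with hq | rfl
  · exact (add_of_lt_mul (d := 2) hb (ih q (by omega)) (by omega)).mono (by omega)
  have hMr : M * (r + 1) = M * r + M := mul_add_one M r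
  rcases lt_or_ge s (2 * b) with hs2 | hs2
  · have hrep := (add_of_lt_mul (d := 1) hb (ih r le_rfl) (by omega)).add (of_mem hM)
    rw [show M * (r + 1) + s = M * r + s + M by omega]
    exact hrep.mono (by omega)
  · have hrep := ((ih r le_rfl (s + b - c) (by omega)).add (of_mem hc)).add (of_mem hMb)
    rw [show M * (r + 1) + s = M * r + (s + b - c) + c + (M - b) by omega]
    exact hrep.mono (by omega)

theorem le_of_lt_pred {m : ℕ} {a : ℕ → ℕ} (hmono : ∀ i, 2 ≤ i → i ≤ m → a (i - 1) < a i)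
    {i j : ℕ} (hi : 1 ≤ i) (hij : i ≤ j) (hj : j ≤ m) : a i ≤ a j := by
  induction j, hij using Nat.le_induction with
  | base => exact le_rfl
  | succ j hij ih => exact (ih (by omega)).trans (hmono (j + 1) (by omega) hj).le

theorem canRep_two_mul_add {m : ℕ} {a : ℕ → ℕ} (ha1 : a 1 = 1)
    (hmono : ∀ i, 2 ≤ i → i ≤ m → a (i - 1) < a i)
    (h3 : ∀ i, 2 ≤ i → i ≤ m → a i ≤ 3 * a (i - 1))
    (hsym : ∀ i, 1 ≤ i → i ≤ m - 1 → a (m + i) = 2 * a m - a (m - i))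
    (h2m : a (2 * m) = 2 * a m) (r : ℕ) (hr : r ≤ m - 1) :
    ∀ q ≤ r, ∀ s < a (r + 1),
      CanRep ((Finset.Icc 1 (2 * m)).image a) (2 * r) (2 * a m * q + s) := by
  have mem : ∀ j, 1 ≤ j → j ≤ 2 * m → a j ∈ (Finset.Icc 1 (2 * m)).image a := fun j h1 h2 =>
    Finset.mem_image_of_mem a (Finset.mem_Icc.mpr ⟨h1, h2⟩)
  induction r with
  | zero =>
    intro q hq s hs
    obtain rfl : q = 0 := by omega
    obtain rfl : s = 0 := by rw [zero_add, ha1] at hs; omega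
    exact zero _ _
  | succ r ih =>
    have hMb : 2 * a m - a (r + 1) ∈ (Finset.Icc 1 (2 * m)).image a := by
      have hsym' := hsym (m - (r + 1)) (by omega) (by omega)
      rw [Nat.sub_sub_self (by omega)] at hsym'
      exact hsym' ▸ mem _ (by omega) (by omega)
    refine canRep_mul_add_succ (h2m ▸ mem (2 * m) (by omega) le_rfl) (mem (r + 1) (by omega)
      (by omega)) (mem (r + 2) (by omega) (by omega)) hMb ?_ (h3 (r + 2) (by omega) (by omega))
      (ih (by omega))
    have := le_of_lt_pred hmono (i := r + 1) (j := m) (by omega) (by omega) le_rfl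
    omega

theorem stmt_1_general (m : ℕ) (a : ℕ → ℕ)
    (ha1 : a 1 = 1)
    (hmono : ∀ i, 2 ≤ i → i ≤ m → a (i - 1) < a i)
    (h3 : ∀ i, 2 ≤ i → i ≤ m → a i ≤ 3 * a (i - 1))
    (hsym : ∀ i, 1 ≤ i → i ≤ m - 1 → a (m + i) = 2 * a m - a (m - i))
    (h2m : a (2 * m) = 2 * a m) :
    ∀ r, 1 ≤ r → r ≤ m - 1 →
      ∀ n : ℕ, n / (2 * a m) ≤ r → n % (2 * a m) < a (r + 1) →
        CanRep ((Finset.Icc 1 (2 * m)).image a) (2 * r) n := by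
  intro r _ hr n hq hs
  have hrep := canRep_two_mul_add ha1 hmono h3 hsym h2m r hr _ hq _ hs
  rwa [Nat.div_add_mod] at hrep

theorem stmt_1 (m : ℕ) (hm : 1 ≤ m) (a : ℕ → ℕ)
    (ha1 : a 1 = 1)
    (hmono : ∀ i, 2 ≤ i → i ≤ m → a (i - 1) < a i)
    (h3 : ∀ i, 2 ≤ i → i ≤ m → a i ≤ 3 * a (i - 1))
    (hsym : ∀ i, 1 ≤ i → i ≤ m - 1 → a (m + i) = 2 * a m - a (m - i))
    (h2m : a (2 * m) = 2 * a m) :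
    ∀ r, 1 ≤ r → r ≤ m - 1 →
      ∀ n : ℕ, n / (2 * a m) ≤ r → n % (2 * a m) < a (r + 1) →
        CanRep ((Finset.Icc 1 (2 * m)).image a) (2 * r) n :=
  stmt_1_general m a ha1 hmono h3 hsym h2m
end

section
/- Let m ≥ 1 and let A = {1 = a_1 < a_2 < ... < a_{2m}} be a symmetric base of even size with a_i ≤ 3·a_{i-1} for all 2 ≤ i ≤ m. Then A is compact: every integer n with 0 ≤ n ≤ 2m·a_{2m} = 4m·a_m can be written as a sum of at most 2m elements of A, with repetition allowed. -/
theorem Multiset.sum_map_const_tsub {l : Multiset ℕ} {C : ℕ} (hl : ∀ x ∈ l, x ≤ C) :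
    (l.map (C - ·)).sum = Multiset.card l * C - l.sum := by
  simpa [Multiset.map_const'] using Multiset.sum_map_tsub l (f := fun _ ↦ C) (g := id) hl

theorem CanRep.of_insert_zero {A : Finset ℕ} {t n : ℕ} (h : CanRep (insert 0 A) t n) :
    CanRep A t n := by
  obtain ⟨l, hl, hcard, hsum⟩ := h
  refine ⟨l.filter (· ≠ 0), fun x hx ↦ ?_,
    (Multiset.card_le_card (Multiset.filter_le _ l)).trans hcard, ?_⟩
  · obtain ⟨hxl, hx0⟩ := Multiset.mem_filter.mp hx
    exact (Finset.mem_insert.mp (hl x hxl)).resolve_left hx0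
  · have hzero : (l.filter fun x ↦ ¬x ≠ 0).sum = 0 :=
      Multiset.sum_eq_zero fun x hx ↦ not_not.mp (Multiset.mem_filter.mp hx).2
    have hsplit := congrArg Multiset.sum (Multiset.filter_add_not (· ≠ 0) l)
    rwa [Multiset.sum_add, hzero, add_zero, hsum] at hsplit

theorem CanRep.mul_tsub {B : Finset ℕ} {C t n : ℕ} (hB : ∀ x ∈ B, x ≤ C ∧ C - x ∈ B)
    (h0 : 0 ∈ B) (h : CanRep B t n) : CanRep B t (t * C - n) := by
  obtain ⟨l, hl, hcard, rfl⟩ := h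
  obtain ⟨d, rfl⟩ := Nat.exists_eq_add_of_le hcard
  have hC : C ∈ B := by simpa using (hB 0 h0).2
  have hlC : ∀ x ∈ l, x ≤ C := fun x hx ↦ (hB x (hl x hx)).1
  have hle : l.sum ≤ Multiset.card l * C := by simpa using Multiset.sum_le_card_nsmul l C hlC
  refine ⟨l.map (C - ·) + Multiset.replicate d C, ?_, ?_, ?_⟩
  · simp only [Multiset.mem_add, Multiset.mem_map, Multiset.mem_replicate]
    rintro _ (⟨x, hx, rfl⟩ | ⟨-, rfl⟩)
    exacts [(hB x (hl x hx)).2, hC]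
  · simp only [Multiset.card_add, Multiset.card_map, Multiset.card_replicate]
    omega
  · rw [Multiset.sum_add, Multiset.sum_map_const_tsub hlC, Multiset.sum_replicate, smul_eq_mul,
      add_mul]
    omega

theorem CanRep.of_forall_le_mul {B : Finset ℕ} {C m : ℕ} (hB : ∀ x ∈ B, x ≤ C ∧ C - x ∈ B)
    (h0 : 0 ∈ B) (hlow : ∀ n ≤ m * C, CanRep B (2 * m) n) :
    ∀ n ≤ 2 * m * C, CanRep B (2 * m) n := by
  intro n hn
  have hdouble : 2 * m * C = 2 * (m * C) := by ring
  rcases le_total n (m * C) with h | h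
  · exact hlow n h
  · have := (hlow (2 * m * C - n) (by omega)).mul_tsub hB h0
    rwa [Nat.sub_sub_self hn] at this

/-- `r = P.sum - N.sum` for multisets `P`, `N` of elements of `L` with at most `t` terms in all,
of which at most `q` are subtracted. -/
def SignedRep (L : Finset ℕ) (q t r : ℕ) : Prop :=
  ∃ P N : Multiset ℕ, (∀ x ∈ P, x ∈ L) ∧ (∀ x ∈ N, x ∈ L) ∧ Multiset.card N ≤ q ∧
    Multiset.card P + Multiset.card N ≤ t ∧ P.sum = r + N.sum

namespace SignedRep

variable {L : Finset ℕ} {q t r : ℕ}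

theorem zero (q t : ℕ) : SignedRep L q t 0 :=
  ⟨0, 0, by simp, by simp, by simp, by simp, by simp⟩

theorem mono {q' t' : ℕ} (h : SignedRep L q t r) (hq : q ≤ q') (ht : t ≤ t') :
    SignedRep L q' t' r := by
  obtain ⟨P, N, hP, hN, hNq, hcard, hsum⟩ := h
  exact ⟨P, N, hP, hN, hNq.trans hq, hcard.trans ht, hsum⟩

theorem of_sub_mem {x : ℕ} (hx : x ∈ L) (hxr : x ≤ r) (h : SignedRep L q t (r - x)) :
    SignedRep L q (t + 1) r := by
  obtain ⟨P, N, hP, hN, hNq, hcard, hsum⟩ := h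
  refine ⟨x ::ₘ P, N, Multiset.forall_mem_cons.mpr ⟨hx, hP⟩, hN, hNq, ?_, ?_⟩
  · rw [Multiset.card_cons]
    omega
  · rw [Multiset.sum_cons]
    omega

theorem of_mem_sub {x : ℕ} (hx : x ∈ L) (hrx : r ≤ x) (h : SignedRep L q t (x - r)) :
    SignedRep L t (t + 1) r := by
  obtain ⟨P, N, hP, hN, -, hcard, hsum⟩ := h
  refine ⟨x ::ₘ N, P, Multiset.forall_mem_cons.mpr ⟨hx, hN⟩, hP, by omega, ?_, ?_⟩
  · rw [Multiset.card_cons]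
    omega
  · rw [Multiset.sum_cons]
    omega

theorem canRep {B : Finset ℕ} {C : ℕ} (hB : ∀ x ∈ B, x ≤ C ∧ C - x ∈ B) (h0 : 0 ∈ B)
    (hL : L ⊆ B) (h : SignedRep L q t r) : CanRep B (t + q) (q * C + r) := by
  obtain ⟨P, N, hP, hN, hNq, hcard, hsum⟩ := h
  obtain ⟨d, rfl⟩ := Nat.exists_eq_add_of_le hNq
  have hC : C ∈ B := by simpa using (hB 0 h0).2
  have hNC : ∀ x ∈ N, x ≤ C := fun x hx ↦ (hB x (hL (hN x hx))).1
  have hle : N.sum ≤ Multiset.card N * C := by simpa using Multiset.sum_le_card_nsmul N C hNC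
  refine ⟨P + N.map (C - ·) + Multiset.replicate d C, ?_, ?_, ?_⟩
  · simp only [Multiset.mem_add, Multiset.mem_map, Multiset.mem_replicate]
    rintro _ ((hx | ⟨x, hx, rfl⟩) | ⟨-, rfl⟩)
    exacts [hL (hP _ hx), (hB x (hL (hN x hx))).2, hC]
  · simp only [Multiset.card_add, Multiset.card_map, Multiset.card_replicate]
    omega
  · rw [Multiset.sum_add, Multiset.sum_add, Multiset.sum_map_const_tsub hNC,
      Multiset.sum_replicate, smul_eq_mul, add_mul]
    omega

end SignedRep

section Growth

variable {L : Finset ℕ} {a : ℕ → ℕ} {m : ℕ}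

theorem signedRep_of_le (ha1 : a 1 = 1) (h3 : ∀ i, 2 ≤ i → i ≤ m → a i ≤ 3 * a (i - 1))
    (hL : ∀ i, 1 ≤ i → i ≤ m → a i ∈ L) {k : ℕ} (hk : 1 ≤ k) (hkm : k ≤ m) {r : ℕ}
    (hr : r ≤ a k) : SignedRep L (k - 1) k r := by
  induction k, hk using Nat.le_induction generalizing r with
  | base =>
    rw [ha1] at hr
    interval_cases r
    · exact .zero _ _
    · exact .of_sub_mem (hL 1 le_rfl hkm) (by omega) (by rw [ha1]; exact .zero _ _)
  | succ k hk ih =>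
    have hstep : a (k + 1) ≤ 3 * a k := by simpa using h3 (k + 1) (by omega) hkm
    have hak : a k ∈ L := hL k hk (by omega)
    rw [Nat.add_sub_cancel]
    rcases le_or_gt r (a k) with h1 | h1
    · exact (ih (by omega) h1).mono (by omega) (by omega)
    rcases le_or_gt r (2 * a k) with h2 | h2
    · exact ((ih (by omega) (by omega)).of_sub_mem hak h1.le).mono (by omega) le_rfl
    · exact (ih (by omega) (by omega)).of_mem_sub (hL (k + 1) (by omega) hkm) (by omega)

theorem signedRep_of_le_of_lt (ha1 : a 1 = 1) (h3 : ∀ i, 2 ≤ i → i ≤ m → a i ≤ 3 * a (i - 1))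
    (hL : ∀ i, 1 ≤ i → i ≤ m → a i ∈ L) {q k : ℕ} (hqk : q < k) (hkm : k ≤ m) {r : ℕ}
    (hr : r ≤ a k) : SignedRep L q (2 * k - 1 - q) r := by
  induction k, hqk using Nat.le_induction generalizing r with
  | base => simpa [two_mul] using signedRep_of_le ha1 h3 hL (by omega) hkm hr
  | succ k hk ih =>
    have hstep : a (k + 1) ≤ 3 * a k := by simpa using h3 (k + 1) (by omega) hkm
    have hak : a k ∈ L := hL k (by omega) (by omega)
    rcases le_or_gt r (a k) with h1 | h1
    · exact (ih (by omega) h1).mono le_rfl (by omega)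
    rcases le_or_gt r (2 * a k) with h2 | h2
    · exact ((ih (by omega) (by omega)).of_sub_mem hak h1.le).mono le_rfl (by omega)
    · exact (((ih (by omega) (by omega)).of_sub_mem hak (by omega)).of_sub_mem hak
        (by omega)).mono le_rfl (by omega)

theorem signedRep_of_le_two_mul (ha1 : a 1 = 1)
    (h3 : ∀ i, 2 ≤ i → i ≤ m → a i ≤ 3 * a (i - 1)) (hL : ∀ i, 1 ≤ i → i ≤ m → a i ∈ L)
    {q k : ℕ} (hqk : q < k) (hkm : k ≤ m) {r : ℕ} (hr : r ≤ 2 * a k) :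
    SignedRep L q (2 * k - q) r := by
  rcases le_or_gt r (a k) with h | h
  · exact (signedRep_of_le_of_lt ha1 h3 hL hqk hkm h).mono le_rfl (by omega)
  · exact ((signedRep_of_le_of_lt ha1 h3 hL hqk hkm (by omega)).of_sub_mem
      (hL k (by omega) hkm) h.le).mono le_rfl (by omega)

end Growth

section SymmetricBase

variable {a : ℕ → ℕ} {m : ℕ}

theorem apply_le_apply_of_lt_succ (hmono : ∀ i, 2 ≤ i → i ≤ m → a (i - 1) < a i) {s : ℕ}
    (hs : 1 ≤ s) (hsm : s ≤ m) : a s ≤ a m :=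
  monotoneOn_of_le_succ (s := Set.Icc 1 m) Set.ordConnected_Icc
    (fun i _ hi hi' ↦ by
      simp only [Order.succ_eq_add_one, Set.mem_Icc] at hi hi'
      simpa using (hmono (i + 1) (by omega) hi'.2).le)
    ⟨hs, hsm⟩ ⟨hs.trans hsm, le_rfl⟩ hsm

theorem symmetricBase_tsub_mem (hm : 1 ≤ m) (hmono : ∀ i, 2 ≤ i → i ≤ m → a (i - 1) < a i)
    (hsym : ∀ i, 1 ≤ i → i ≤ m - 1 → a (m + i) = 2 * a m - a (m - i))
    (h2m : a (2 * m) = 2 * a m) :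
    ∀ x ∈ insert 0 ((Finset.Icc 1 (2 * m)).image a),
      x ≤ 2 * a m ∧ 2 * a m - x ∈ insert 0 ((Finset.Icc 1 (2 * m)).image a) := by
  have mem : ∀ s, 1 ≤ s → s ≤ 2 * m → a s ∈ insert 0 ((Finset.Icc 1 (2 * m)).image a) :=
    fun s hs1 hs2 ↦ Finset.mem_insert_of_mem (Finset.mem_image_of_mem a (by simp [hs1, hs2]))
  simp only [Finset.mem_insert, Finset.mem_image, Finset.mem_Icc]
  rintro _ (rfl | ⟨s, ⟨hs1, hs2⟩, rfl⟩)
  · simpa [← h2m] using mem (2 * m) (by omega) le_rfl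
  rcases lt_trichotomy s m with hsm | rfl | hsm
  · have hi := hsym (m - s) (by omega) (by omega)
    rw [Nat.sub_sub_self hsm.le] at hi
    refine ⟨by linarith [apply_le_apply_of_lt_succ hmono hs1 hsm.le], ?_⟩
    simpa [hi] using mem (m + (m - s)) (by omega) (by omega)
  · exact ⟨by omega, by simpa [show 2 * a s - a s = a s by omega] using mem s hs1 hs2⟩
  rcases hs2.lt_or_eq with hs2 | rfl
  · have hi := hsym (s - m) (by omega) (by omega)
    rw [Nat.add_sub_cancel' hsm.le] at hi
    have hle := apply_le_apply_of_lt_succ hmono (s := m - (s - m)) (by omega) (by omega)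
    refine ⟨by omega, ?_⟩
    simpa [show 2 * a m - a s = a (m - (s - m)) by omega] using
      mem (m - (s - m)) (by omega) (by omega)
  · simp [h2m]

theorem symmetricBase_canRep_of_le_mul (hm : 1 ≤ m) (ha1 : a 1 = 1)
    (hmono : ∀ i, 2 ≤ i → i ≤ m → a (i - 1) < a i)
    (h3 : ∀ i, 2 ≤ i → i ≤ m → a i ≤ 3 * a (i - 1))
    (hsym : ∀ i, 1 ≤ i → i ≤ m - 1 → a (m + i) = 2 * a m - a (m - i))
    (h2m : a (2 * m) = 2 * a m) :
    ∀ n ≤ m * (2 * a m), CanRep (insert 0 ((Finset.Icc 1 (2 * m)).image a)) (2 * m) n := by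
  intro n hn
  have hB := symmetricBase_tsub_mem hm hmono hsym h2m
  have h0 := Finset.mem_insert_self 0 ((Finset.Icc 1 (2 * m)).image a)
  have hL : ∀ i, 1 ≤ i → i ≤ m → a i ∈ insert 0 ((Finset.Icc 1 (2 * m)).image a) :=
    fun i hi1 him ↦ Finset.mem_insert_of_mem (Finset.mem_image_of_mem a (by simp; omega))
  have hC : 0 < 2 * a m := by linarith [apply_le_apply_of_lt_succ hmono le_rfl hm]
  have hq : n / (2 * a m) ≤ m := Nat.div_le_of_le_mul (by linarith)
  rw [← Nat.div_add_mod' n (2 * a m)]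
  rcases hq.lt_or_eq with hq | hq
  · have := (signedRep_of_le_two_mul ha1 h3 hL hq le_rfl (Nat.mod_lt n hC).le).canRep hB h0
      subset_rfl
    rwa [Nat.sub_add_cancel (by omega)] at this
  · have hmod : n % (2 * a m) = 0 := by
      have := Nat.div_add_mod' n (2 * a m)
      rw [hq] at this
      omega
    have := (SignedRep.zero (L := insert 0 ((Finset.Icc 1 (2 * m)).image a)) m m).canRep hB h0
      subset_rfl
    rw [hq, hmod]
    rwa [← two_mul] at this

end SymmetricBase

theorem stmt_2 (m : ℕ) (hm : 1 ≤ m) (a : ℕ → ℕ)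
    (ha1 : a 1 = 1)
    (hmono : ∀ i, 2 ≤ i → i ≤ m → a (i - 1) < a i)
    (h3 : ∀ i, 2 ≤ i → i ≤ m → a i ≤ 3 * a (i - 1))
    (hsym : ∀ i, 1 ≤ i → i ≤ m - 1 → a (m + i) = 2 * a m - a (m - i))
    (h2m : a (2 * m) = 2 * a m) :
    ∀ n ≤ 2 * m * a (2 * m), CanRep ((Finset.Icc 1 (2 * m)).image a) (2 * m) n := by
  intro n hn
  rw [h2m] at hn
  exact (CanRep.of_forall_le_mul (symmetricBase_tsub_mem hm hmono hsym h2m)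
    (Finset.mem_insert_self _ _) (symmetricBase_canRep_of_le_mul hm ha1 hmono h3 hsym h2m)
    n hn).of_insert_zero
end

section
/- Let a_m and â_m be positive integers with a_m ≤ â_m ≤ 3·a_m, and let n be a nonnegative integer with n ≥ 2·(â_m + a_m). Then there exist nonnegative integers q̂, q, r with n = q̂·â_m + q·a_m + r, 0 ≤ r < a_m, and |q̂ − q| ≤ 2. -/
/-! Write `n = k * (b + a) + s` with `s < b + a`. If `s ≥ b`, one more copy of `b` leaves a
remainder below `a`; otherwise `s < b ≤ 3 * a`, so `s` holds at most two copies of `a`. Either way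
the coefficients `k + e` of `b` and `k + q` of `a` differ by `|e - q| ≤ 2`. -/

theorem exists_eq_mul_add_mul_add_of_lt_add {a b s : ℕ} (ha : 0 < a) (hb : b ≤ 3 * a)
    (hs : s < b + a) :
    ∃ e q r : ℕ, s = e * b + q * a + r ∧ r < a ∧ |(e : ℤ) - q| ≤ 2 := by
  by_cases hbs : b ≤ s
  · exact ⟨1, 0, s - b, by omega, by omega, by norm_num⟩
  · have hq : s / a ≤ 2 := Nat.lt_succ_iff.mp (Nat.div_lt_of_lt_mul (by omega))
    refine ⟨0, s / a, s % a, ?_, Nat.mod_lt s ha, ?_⟩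
    · rw [zero_mul, zero_add, mul_comm, Nat.div_add_mod]
    · rw [Nat.cast_zero, zero_sub, abs_neg, Nat.abs_cast]
      exact_mod_cast hq

theorem stmt_4_general (am bm n : ℕ) (ham : 0 < am) (h2 : bm ≤ 3 * am) :
    ∃ qh q r : ℕ, n = qh * bm + q * am + r ∧ r < am ∧
      |(qh : ℤ) - (q : ℤ)| ≤ 2 := by
  set k := n / (bm + am)
  obtain ⟨e, q, r, hs, hr, hdiff⟩ :=
    exists_eq_mul_add_mul_add_of_lt_add ham h2 (Nat.mod_lt n (by omega : 0 < bm + am))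
  refine ⟨k + e, k + q, r, ?_, hr, ?_⟩
  · calc n = (bm + am) * k + n % (bm + am) := (Nat.div_add_mod n _).symm
      _ = (k + e) * bm + (k + q) * am + r := by rw [hs]; ring
  · push_cast
    rwa [add_sub_add_left_eq_sub]

theorem stmt_4 (am bm n : ℕ) (ham : 0 < am) (h1 : am ≤ bm) (h2 : bm ≤ 3 * am)
    (hn : 2 * (bm + am) ≤ n) :
    ∃ qh q r : ℕ, n = qh * bm + q * am + r ∧ r < am ∧
      |(qh : ℤ) - (q : ℤ)| ≤ 2 :=
  stmt_4_general am bm n ham h2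
end

section
/- Let m ≥ 2 and let A = {1 = a_1 < a_2 < ... < a_{2m}} be a symmetric base of even size with a_i ≥ 8·a_{i-1} for all 2 ≤ i ≤ m. Then A is not compact: there exists an integer n with 0 ≤ n ≤ 2m·a_{2m} that cannot be written as a sum of at most 2m elements of A with repetition. -/
open Finset

theorem CanRep.filter_lt {A : Finset ℕ} {t n b : ℕ} (h : CanRep A t n) (hn : n < b) :
    CanRep (A.filter (· < b)) t n := by
  obtain ⟨l, hlA, hcard, rfl⟩ := h
  refine ⟨l, fun x hx => mem_filter.2 ⟨hlA x hx, ?_⟩, hcard, rfl⟩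
  exact (Multiset.le_sum_of_mem hx).trans_lt hn

theorem card_le_choose_of_forall_canRep {S R : Finset ℕ} {t : ℕ}
    (hR : ∀ n ∈ R, CanRep S t n) : #R ≤ (#S + t).choose t := by
  classical
  let S₀ := insert 0 S
  let sum : Sym S₀ t → ℕ := fun s => ((s : Multiset S₀).map (↑)).sum
  have hR_sub : R ⊆ univ.image sum := by
    intro n hn
    obtain ⟨l, hlS, hcard, rfl⟩ := hR n hn
    obtain ⟨l₀, hl₀⟩ : ∃ l₀ : Multiset S₀,
        l₀.map (↑) = l + Multiset.replicate (t - Multiset.card l) 0 := by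
      refine CanLift.prf _ fun x hx => ?_
      rcases Multiset.mem_add.1 hx with hx | hx
      · exact mem_insert_of_mem (hlS x hx)
      · rw [Multiset.eq_of_mem_replicate hx]; exact mem_insert_self 0 S
    have hcard₀ : Multiset.card l₀ = t := by
      rw [← Multiset.card_map, hl₀, Multiset.card_add, Multiset.card_replicate]; omega
    refine mem_image.2 ⟨⟨l₀, hcard₀⟩, mem_univ _, ?_⟩
    simp [sum, hl₀]
  calc #R ≤ #(univ.image sum) := card_le_card hR_sub
    _ ≤ Fintype.card (Sym S₀ t) := card_image_le
    _ = (#S₀ + t - 1).choose t := by rw [Sym.card_sym_eq_choose, Fintype.card_coe]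
    _ ≤ (#S + t).choose t := by
      have : #S₀ ≤ #S + 1 := card_insert_le 0 S
      exact Nat.choose_le_choose _ (by omega)

theorem exists_lt_not_canRep {A : Finset ℕ} {t b : ℕ}
    (h : (#(A.filter (· < b)) + t).choose t < b) : ∃ n < b, ¬ CanRep A t n := by
  by_contra! hall
  have := card_le_choose_of_forall_canRep (R := range b) fun n hn =>
    (hall n (mem_range.1 hn)).filter_lt (mem_range.1 hn)
  rw [card_range] at this
  omega

theorem choose_three_mul_add_five_succ_mul (k : ℕ) :
    (3 * k + 5).choose (k + 1) * ((k + 1) * (2 * k + 3) * (2 * k + 4))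
      = (3 * k + 2).choose k * ((3 * k + 3) * (3 * k + 4) * (3 * k + 5)) := by
  have h₁ := Nat.add_one_mul_choose_eq (3 * k + 2) k
  have h₂ := Nat.choose_mul_succ_eq (3 * k + 3) (k + 1)
  have h₃ := Nat.choose_mul_succ_eq (3 * k + 4) (k + 1)
  rw [show 3 * k + 3 + 1 - (k + 1) = 2 * k + 3 by omega] at h₂
  rw [show 3 * k + 4 + 1 - (k + 1) = 2 * k + 4 by omega] at h₃
  calc (3 * k + 5).choose (k + 1) * ((k + 1) * (2 * k + 3) * (2 * k + 4))
      = (3 * k + 5).choose (k + 1) * (2 * k + 4) * (2 * k + 3) * (k + 1) := by ring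
    _ = (3 * k + 3).choose (k + 1) * (k + 1) * ((3 * k + 4) * (3 * k + 5)) := by
      rw [← h₃, mul_assoc _ (3 * k + 4 + 1), mul_comm (3 * k + 4 + 1), ← mul_assoc, ← h₂]; ring
    _ = (3 * k + 2).choose k * ((3 * k + 3) * (3 * k + 4) * (3 * k + 5)) := by
      rw [← h₁]; ring

theorem choose_three_mul_add_two_mul_four_pow_le (k : ℕ) :
    (3 * k + 2).choose k * 4 ^ k ≤ 27 ^ k := by
  induction k with
  | zero => simp
  | succ k ih =>
    have hstep : 4 * (3 * k + 5).choose (k + 1) ≤ 27 * (3 * k + 2).choose k := by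
      refine Nat.le_of_mul_le_mul_right (c := (k + 1) * (2 * k + 3) * (2 * k + 4)) ?_
        (by positivity)
      have hcoeff : 4 * ((3 * k + 3) * (3 * k + 4) * (3 * k + 5))
          ≤ 27 * ((k + 1) * (2 * k + 3) * (2 * k + 4)) := by nlinarith
      calc 4 * (3 * k + 5).choose (k + 1) * ((k + 1) * (2 * k + 3) * (2 * k + 4))
          = (3 * k + 2).choose k * (4 * ((3 * k + 3) * (3 * k + 4) * (3 * k + 5))) := by
            rw [mul_assoc, choose_three_mul_add_five_succ_mul]; ring
        _ ≤ (3 * k + 2).choose k * (27 * ((k + 1) * (2 * k + 3) * (2 * k + 4))) := by gcongr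
        _ = 27 * (3 * k + 2).choose k * ((k + 1) * (2 * k + 3) * (2 * k + 4)) := by ring
    calc (3 * (k + 1) + 2).choose (k + 1) * 4 ^ (k + 1)
        = 4 * (3 * k + 5).choose (k + 1) * 4 ^ k := by ring_nf
      _ ≤ 27 * (3 * k + 2).choose k * 4 ^ k := by gcongr
      _ ≤ 27 ^ (k + 1) := by rw [pow_succ, mul_assoc]; nlinarith

theorem choose_three_mul_add_two_lt_eight_pow {k : ℕ} (hk : k ≠ 0) :
    (3 * k + 2).choose k < 8 ^ k := by
  have h27 : 27 ^ k < 32 ^ k := Nat.pow_lt_pow_left (by norm_num) hk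
  have := choose_three_mul_add_two_mul_four_pow_le k
  rw [show 32 = 8 * 4 by rfl, mul_pow] at h27
  exact Nat.lt_of_mul_lt_mul_right (this.trans_lt h27)

section SymmetricBase

variable {m : ℕ} {a : ℕ → ℕ}

theorem monotoneOn_Icc_of_eight_mul_le (h8 : ∀ i, 2 ≤ i → i ≤ m → 8 * a (i - 1) ≤ a i) :
    MonotoneOn a (Set.Icc 1 m) := by
  refine monotoneOn_of_le_succ Set.ordConnected_Icc fun i _ hi hsucc => ?_
  rw [Order.succ_eq_add_one] at hsucc ⊢
  have := h8 (i + 1) (by simp at hi; omega) hsucc.2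
  rw [Nat.add_sub_cancel] at this
  omega

theorem eight_pow_le (ha1 : a 1 = 1) (h8 : ∀ i, 2 ≤ i → i ≤ m → 8 * a (i - 1) ≤ a i)
    {i : ℕ} (hi : 1 ≤ i) (him : i ≤ m) : 8 ^ (i - 1) ≤ a i := by
  induction i, hi using Nat.le_induction with
  | base => simp [ha1]
  | succ i hi ih =>
    have hstep := h8 (i + 1) (by omega) him
    rw [Nat.add_sub_cancel] at hstep ⊢
    calc 8 ^ i = 8 ^ (i - 1) * 8 := by rw [← pow_succ, Nat.sub_add_cancel hi]
      _ ≤ a i * 8 := by gcongr; exact ih (by omega)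
      _ ≤ a (i + 1) := by omega

theorem apply_mid_le_apply (h8 : ∀ i, 2 ≤ i → i ≤ m → 8 * a (i - 1) ≤ a i)
    (hsym : ∀ i, 1 ≤ i → i ≤ m - 1 → a (m + i) = 2 * a m - a (m - i))
    (h2m : a (2 * m) = 2 * a m) {j : ℕ} (hmj : m ≤ j) (hj : j ≤ 2 * m) : a m ≤ a j := by
  obtain rfl | hj := hj.eq_or_lt
  · omega
  obtain rfl | hmj := hmj.eq_or_lt
  · rfl
  have hreflect : a (m - (j - m)) ≤ a m :=
    monotoneOn_Icc_of_eight_mul_le h8 ⟨by omega, by omega⟩ ⟨by omega, le_rfl⟩ (by omega)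
  have := hsym (j - m) (by omega) (by omega)
  rw [Nat.add_sub_cancel' hmj.le] at this
  omega

theorem card_filter_image_lt_le (h8 : ∀ i, 2 ≤ i → i ≤ m → 8 * a (i - 1) ≤ a i)
    (hsym : ∀ i, 1 ≤ i → i ≤ m - 1 → a (m + i) = 2 * a m - a (m - i))
    (h2m : a (2 * m) = 2 * a m) :
    #(((Icc 1 (2 * m)).image a).filter (· < a m)) ≤ m - 1 := by
  calc #(((Icc 1 (2 * m)).image a).filter (· < a m)) ≤ #((Icc 1 (m - 1)).image a) := by
        refine card_le_card fun x hx => ?_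
        obtain ⟨hx, hxlt⟩ := mem_filter.1 hx
        obtain ⟨j, hj, rfl⟩ := mem_image.1 hx
        rw [mem_Icc] at hj
        refine mem_image_of_mem a (mem_Icc.2 ⟨hj.1, ?_⟩)
        by_contra! hmj
        exact (apply_mid_le_apply h8 hsym h2m (by omega) hj.2).not_gt hxlt
    _ ≤ m - 1 := card_image_le.trans (by simp)

end SymmetricBase

theorem stmt_9_general (m : ℕ) (hm : 2 ≤ m) (a : ℕ → ℕ)
    (ha1 : a 1 = 1)
    (h8 : ∀ i, 2 ≤ i → i ≤ m → 8 * a (i - 1) ≤ a i)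
    (hsym : ∀ i, 1 ≤ i → i ≤ m - 1 → a (m + i) = 2 * a m - a (m - i))
    (h2m : a (2 * m) = 2 * a m) :
    ∃ n ≤ 2 * m * a (2 * m), ¬ CanRep ((Finset.Icc 1 (2 * m)).image a) (2 * m) n := by
  have hcount : (#(((Icc 1 (2 * m)).image a).filter (· < a m)) + 2 * m).choose (2 * m) < a m :=
    calc _ ≤ (m - 1 + 2 * m).choose (2 * m) :=
          Nat.choose_le_choose _ (by have := card_filter_image_lt_le h8 hsym h2m; omega)
      _ = (3 * (m - 1) + 2).choose (m - 1) := by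
          rw [← Nat.choose_symm_add, show m - 1 + 2 * m = 3 * (m - 1) + 2 by omega]
      _ < 8 ^ (m - 1) := choose_three_mul_add_two_lt_eight_pow (by omega)
      _ ≤ a m := eight_pow_le ha1 h8 (by omega) le_rfl
  obtain ⟨n, hn, hnot⟩ := exists_lt_not_canRep hcount
  refine ⟨n, ?_, hnot⟩
  calc n ≤ a (2 * m) := by omega
    _ ≤ 2 * m * a (2 * m) := Nat.le_mul_of_pos_left _ (by omega)

theorem stmt_9 (m : ℕ) (hm : 2 ≤ m) (a : ℕ → ℕ)
    (ha1 : a 1 = 1)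
    (hmono : ∀ i, 2 ≤ i → i ≤ m → a (i - 1) < a i)
    (h8 : ∀ i, 2 ≤ i → i ≤ m → 8 * a (i - 1) ≤ a i)
    (hsym : ∀ i, 1 ≤ i → i ≤ m - 1 → a (m + i) = 2 * a m - a (m - i))
    (h2m : a (2 * m) = 2 * a m) :
    ∃ n ≤ 2 * m * a (2 * m), ¬ CanRep ((Finset.Icc 1 (2 * m)).image a) (2 * m) n :=
  stmt_9_general m hm a ha1 h8 hsym h2m
end

section
/- Let m ≥ 5 and let A = {1 = a_1 < ... < a_m < â_m < a_{m+1} < ... < a_{2m}} be a symmetric base of odd size k = 2m+1 with a_i ≥ 8·a_{i-1} for 2 ≤ i ≤ m and â_m = a_m + x with x ≥ 7·a_m. Then A is not compact: some integer n with 0 ≤ n ≤ (2m+1)·(â_m + a_m) cannot be written as a sum of at most 2m+1 elements of A with repetition. -/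
open Finset

def Finset.symSums {α : Type*} [DecidableEq α] [AddCommMonoid α] (S : Finset α) (t : ℕ) :
    Finset α :=
  univ.image fun s : Sym S t => ((s : Multiset S).map Subtype.val).sum

theorem Finset.card_symSums_le {α : Type*} [DecidableEq α] [AddCommMonoid α] (S : Finset α)
    (t : ℕ) : #(S.symSums t) ≤ (#S + t - 1).choose t :=
  calc _ ≤ Fintype.card (Sym S t) := card_image_le
    _ = _ := by rw [Sym.card_sym_eq_choose, Fintype.card_coe]

theorem CanRep.mem_symSums_insert_zero {A : Finset ℕ} {t n : ℕ} (h : CanRep A t n) :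
    n ∈ (insert 0 A).symSums t := by
  obtain ⟨l, hlA, hlt, rfl⟩ := h
  have hpad : ∀ x ∈ l + Multiset.replicate (t - Multiset.card l) 0, x ∈ insert 0 A := by
    intro x hx
    rcases Multiset.mem_add.1 hx with hx | hx
    · exact mem_insert_of_mem (hlA x hx)
    · rw [Multiset.eq_of_mem_replicate hx]; exact mem_insert_self 0 A
  lift l + Multiset.replicate (t - Multiset.card l) 0 to Multiset (insert 0 A : Finset ℕ)
    using hpad with s hs
  have hcard : Multiset.card s = t := by
    rw [← Multiset.card_map Subtype.val, hs, Multiset.card_add, Multiset.card_replicate]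
    omega
  refine mem_image.2 ⟨⟨s, hcard⟩, mem_univ _, ?_⟩
  simp [hs]

theorem exists_lt_not_canRep_of_choose_lt (B : Finset ℕ) (t N : ℕ) (h : (#B + t).choose t < N) :
    ∃ n < N, ¬ CanRep B t n := by
  have hcard : #((insert 0 B).symSums t) < #(range N) := by
    calc #((insert 0 B).symSums t) ≤ (#(insert 0 B) + t - 1).choose t := card_symSums_le _ t
      _ ≤ (#B + t).choose t := Nat.choose_le_choose t (by have := card_insert_le 0 B; omega)
      _ < #(range N) := by rwa [card_range]
  obtain ⟨n, hn, hnS⟩ := exists_mem_notMem_of_card_lt_card hcard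
  exact ⟨n, mem_range.1 hn, fun hrep => hnS hrep.mem_symSums_insert_zero⟩

theorem CanRep.of_forall_le_mem {A B : Finset ℕ} {t n : ℕ} (h : CanRep A t n)
    (hAB : ∀ x ∈ A, x ≤ n → x ∈ B) : CanRep B t n := by
  obtain ⟨l, hlA, hlt, rfl⟩ := h
  exact ⟨l, fun x hx => hAB x (hlA x hx) (Multiset.le_sum_of_mem hx), hlt, rfl⟩

theorem pow_mul_le_of_forall_mul_le {a : ℕ → ℕ} {c m : ℕ}
    (h : ∀ i, 2 ≤ i → i ≤ m → c * a (i - 1) ≤ a i) {i j : ℕ} (hi : 1 ≤ i) (hij : i ≤ j)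
    (hj : j ≤ m) : c ^ (j - i) * a i ≤ a j := by
  induction j, hij using Nat.le_induction with
  | base => simp
  | succ j hij ih =>
    calc c ^ (j + 1 - i) * a i = c * (c ^ (j - i) * a i) := by
          rw [Nat.sub_add_comm hij, pow_succ]; ring
      _ ≤ c * a j := Nat.mul_le_mul_left c (ih (by omega))
      _ ≤ a (j + 1) := h (j + 1) (by omega) hj

theorem Nat.choose_three_mul_add_one_le_seven_pow (m : ℕ) : (3 * m + 1).choose m ≤ 7 ^ m := by
  induction m with
  | zero => simp
  | succ m ih =>
    have h3 : (3 * m + 4) * (3 * m + 3).choose m = (3 * m + 4).choose (m + 1) * (m + 1) :=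
      Nat.add_one_mul_choose_eq (3 * m + 3) m
    have h2 : (3 * m + 2).choose m * (3 * m + 3) = (3 * m + 3).choose m * (2 * m + 3) := by
      rw [Nat.choose_mul_succ_eq (3 * m + 2) m]; congr 1; omega
    have h1 : (3 * m + 1).choose m * (3 * m + 2) = (3 * m + 2).choose m * (2 * m + 2) := by
      rw [Nat.choose_mul_succ_eq (3 * m + 1) m]; congr 1; omega
    have hstep : (3 * m + 4).choose (m + 1) * ((m + 1) * (2 * m + 3) * (2 * m + 2)) =
        (3 * m + 4) * (3 * m + 3) * (3 * m + 2) * (3 * m + 1).choose m := by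
      linear_combination (2 * m + 3) * (2 * m + 2) * h3.symm +
        (3 * m + 4) * (2 * m + 2) * h2.symm + (3 * m + 4) * (3 * m + 3) * h1.symm
    have hpos : 0 < (m + 1) * (2 * m + 3) * (2 * m + 2) := by positivity
    -- the ratio of consecutive terms increases to 27/4 < 7
    have hratio : (3 * m + 4) * (3 * m + 3) * (3 * m + 2) ≤
        7 * ((m + 1) * (2 * m + 3) * (2 * m + 2)) := by
      nlinarith
    have hle : (3 * m + 4).choose (m + 1) ≤ 7 * (3 * m + 1).choose m := by
      refine Nat.le_of_mul_le_mul_right ?_ hpos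
      rw [hstep]
      nlinarith
    rw [show 3 * (m + 1) + 1 = 3 * m + 4 by ring, pow_succ']
    exact hle.trans (Nat.mul_le_mul_left 7 ih)

theorem le_apply_of_lt_of_le_two_mul {m : ℕ} {a : ℕ → ℕ} {b : ℕ}
    (h8 : ∀ i, 2 ≤ i → i ≤ m → 8 * a (i - 1) ≤ a i)
    (hsym : ∀ i, 1 ≤ i → i ≤ m - 1 → a (m + i) = b + a m - a (m - i))
    (h2m : a (2 * m) = b + a m) {i : ℕ} (hmi : m < i) (hi : i ≤ 2 * m) : b ≤ a i := by
  obtain ⟨k, rfl⟩ : ∃ k, i = m + k := ⟨i - m, by omega⟩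
  rcases (show k = m ∨ k < m by omega) with rfl | hk
  · rw [← two_mul, h2m]; omega
  · have hmk := pow_mul_le_of_forall_mul_le h8 (i := m - k) (j := m) (by omega) (by omega) le_rfl
    have := Nat.le_mul_of_pos_left (a (m - k)) (show 0 < 8 ^ (m - (m - k)) by positivity)
    rw [hsym k (by omega) (by omega)]
    omega

theorem stmt_10_general (m : ℕ) (hm : 5 ≤ m) (a : ℕ → ℕ) (b : ℕ)
    (ha1 : a 1 = 1)
    (h8 : ∀ i, 2 ≤ i → i ≤ m → 8 * a (i - 1) ≤ a i)
    (hb : a m + 7 * a m ≤ b)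
    (hsym : ∀ i, 1 ≤ i → i ≤ m - 1 → a (m + i) = b + a m - a (m - i))
    (h2m : a (2 * m) = b + a m) :
    ∃ n ≤ (2 * m + 1) * (b + a m),
      ¬ CanRep (insert b ((Finset.Icc 1 (2 * m)).image a)) (2 * m + 1) n := by
  have ham : 8 ^ m ≤ 8 * a m := by
    have := pow_mul_le_of_forall_mul_le h8 (i := 1) (j := m) le_rfl (by omega) le_rfl
    rw [ha1, mul_one] at this
    calc 8 ^ m = 8 * 8 ^ (m - 1) := by rw [← pow_succ']; congr 1; omega
      _ ≤ 8 * a m := by omega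
  have hcount : (#((Icc 1 m).image a) + (2 * m + 1)).choose (2 * m + 1) < 8 * a m :=
    calc _ ≤ (m + (2 * m + 1)).choose (2 * m + 1) :=
          Nat.choose_le_choose _ (by simpa using card_image_le (s := Icc 1 m) (f := a))
      _ = (3 * m + 1).choose m := by
          rw [show m + (2 * m + 1) = 3 * m + 1 by ring]; exact Nat.choose_symm_of_eq_add (by ring)
      _ ≤ 7 ^ m := Nat.choose_three_mul_add_one_le_seven_pow m
      _ < 8 ^ m := Nat.pow_lt_pow_left (by norm_num) (by omega)
      _ ≤ 8 * a m := ham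
  obtain ⟨n, hn, hnB⟩ := exists_lt_not_canRep_of_choose_lt _ (2 * m + 1) (8 * a m) hcount
  refine ⟨n, by nlinarith, fun hrep => hnB (hrep.of_forall_le_mem ?_)⟩
  intro x hx hxn
  simp only [mem_insert, mem_image, mem_Icc] at hx
  rcases hx with rfl | ⟨i, ⟨hi1, hi2⟩, rfl⟩
  · omega
  · by_cases him : i ≤ m
    · exact mem_image_of_mem a (mem_Icc.2 ⟨hi1, him⟩)
    · have := le_apply_of_lt_of_le_two_mul h8 hsym h2m (not_le.1 him) hi2
      omega

theorem stmt_10 (m : ℕ) (hm : 5 ≤ m) (a : ℕ → ℕ) (b : ℕ)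
    (ha1 : a 1 = 1)
    (hmono : ∀ i, 2 ≤ i → i ≤ m → a (i - 1) < a i)
    (h8 : ∀ i, 2 ≤ i → i ≤ m → 8 * a (i - 1) ≤ a i)
    (hb : a m + 7 * a m ≤ b)
    (hsym : ∀ i, 1 ≤ i → i ≤ m - 1 → a (m + i) = b + a m - a (m - i))
    (h2m : a (2 * m) = b + a m) :
    ∃ n ≤ (2 * m + 1) * (b + a m),
      ¬ CanRep (insert b ((Finset.Icc 1 (2 * m)).image a)) (2 * m + 1) n :=
  stmt_10_general m hm a b ha1 h8 hb hsym h2m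
end
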